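/- For every m > 0 and k ≥ 3, there exist unique α < ε₀ and b, l < ω such that m = A_α(k,b) + l, with α maximal satisfying A_α(k,0) ≤ m and b maximal satisfying A_α(k,b) ≤ m. -/

import Mathlib

/-- The predecessor of an ordinal notation: `some β` with `β + 1 = α` if `α` is
a successor, `none` otherwise. -/
def predO : ONote → Option ONote
  | .zero => none
  | .oadd .zero n .zero =>
      some (if h : (n : ℕ) = 1 then .zero
            else .oadd .zero ⟨(n : ℕ) - 1, by have h3 : 0 < (n : ℕ) := n.2; omega⟩ .zero)
  | .oadd _ _ .zero => none
  | .oadd e n a => (predO a).map (.oadd e n)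

/-- The standard fundamental sequences for ordinals below `ε₀` (in Cantor normal
form): `0[x] = 0`, `(β+1)[x] = β`, `(δ + ω^{γ+1})[x] = δ + ω^γ·x` and
`(δ + ω^λ)[x] = δ + ω^{λ[x]}` for limits `λ`. -/
def fundSeq : ONote → ℕ → ONote
  | .zero, _ => .zero
  | .oadd e n (.oadd e' n' a'), x => .oadd e n (fundSeq (.oadd e' n' a') x)
  | .oadd .zero n .zero, _ =>
      if h : (n : ℕ) = 1 then .zero
      else .oadd .zero ⟨(n : ℕ) - 1, by have h3 : 0 < (n : ℕ) := n.2; omega⟩ .zero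
  | .oadd (.oadd f m b) n .zero, x =>
      let tail : ONote :=
        match predO (.oadd f m b) with
        | some e' =>
            if h : x = 0 then .zero
            else .oadd e' ⟨x, Nat.pos_of_ne_zero h⟩ .zero
        | none => .oadd (fundSeq (.oadd f m b) x) 1 .zero
      if h : (n : ℕ) = 1 then tail
      else .oadd (.oadd f m b) ⟨(n : ℕ) - 1, by have h3 : 0 < (n : ℕ) := n.2; omega⟩ tail

mutual
/-- The graph of the extended Ackermann function: `EA k α b v` means
`A_α(k,b) = v`, where for limits `λ` one uses the iterated fundamental-sequence
indices `λ_{l,k,b}` (see `LamSeq`). -/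
inductive EA (k : ℕ) : ONote → ℕ → ℕ → Prop
  | zero (b : ℕ) : EA k .zero b (b + 1)
  | succZero {α β : ONote} {v : ℕ} :
      predO α = some β → IterEA k β k 0 v → EA k α 0 v
  | succStep {α β : ONote} {b w v : ℕ} :
      predO α = some β → EA k α b w → IterEA k β k w v → EA k α (b + 1) v
  | limZero {α μ : ONote} {v : ℕ} :
      α ≠ .zero → predO α = none →
      LamSeq k α 0 k μ → IterEA k μ k 0 v → EA k α 0 v
  | limStep {α μ : ONote} {b w v : ℕ} :
      α ≠ .zero → predO α = none →
      EA k α b w → LamSeq k α w k μ → IterEA k μ k w v → EA k α (b + 1) v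

/-- `IterEA k α n b v` means `(A_α(k,·))^n(b) = v`. -/
inductive IterEA (k : ℕ) : ONote → ℕ → ℕ → ℕ → Prop
  | zero (α : ONote) (b : ℕ) : IterEA k α 0 b b
  | succ {α : ONote} {n b v w : ℕ} :
      IterEA k α n b v → EA k α v w → IterEA k α (n + 1) b w

/-- `LamSeq k λ b l μ` means `μ = λ_{l,k,b}`, where `λ_{0,k,b} = λ[b]` and
`λ_{l+1,k,b} = λ[A_{λ_{l,k,b}}(k,b)]`. -/
inductive LamSeq (k : ℕ) : ONote → ℕ → ℕ → ONote → Prop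
  | zero (α : ONote) (b : ℕ) : LamSeq k α b 0 (fundSeq α b)
  | succ {α μ : ONote} {b l v : ℕ} :
      LamSeq k α b l μ → EA k μ b v → LamSeq k α b (l + 1) (fundSeq α v)
end

/-!
`A_α(k,b)` exceeds `b` plus the sum of all coefficients of the Cantor normal form of `α`. At
successors this is one step of the iteration; at a limit `λ` it rests on `λ[x]` having
coefficient sum at least that of `λ` once `x ≥ 2` (for `x = 1` it fails: `ω[1] = 1`), which
applies to `λ_{l,k,b}` from `l = 2` on, hence to `λ_{k,k,b}` as `k ≥ 2`. As there are only
finitely many notations of bounded coefficient sum, only finitely many pairs `(α, b)` have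
`A_α(k,b) ≤ m`, so the greatest `α` and then the greatest `b` exist. They are unique since
`repr` is injective on normal forms and `A` is single-valued.
-/

namespace ONote

def coeffSum : ONote → ℕ
  | zero => 0
  | oadd e n a => e.coeffSum + n + a.coeffSum

theorem coeffSum_pos {o : ONote} (h : o ≠ zero) : 0 < o.coeffSum := by
  cases o with
  | zero => exact absurd rfl h
  | oadd e n a => simp only [coeffSum]; have := n.pos; omega

theorem finite_setOf_coeffSum_le (n : ℕ) : {o : ONote | o.coeffSum ≤ n}.Finite := by
  induction n with
  | zero =>
    refine (Set.finite_singleton zero).subset fun o ho => ?_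
    by_contra hne
    exact (coeffSum_pos hne).ne' (Nat.le_zero.1 ho)
  | succ n ih =>
    refine ((ih.prod ((Set.finite_Iic n.succPNat).prod ih)).image
      fun p : ONote × ℕ+ × ONote => oadd p.1 p.2.1 p.2.2).insert zero |>.subset ?_
    rintro (_ | ⟨e, c, a⟩) ho
    · exact Set.mem_insert _ _
    · have ho : e.coeffSum + c + a.coeffSum ≤ n + 1 := ho
      have := c.pos
      refine Set.mem_insert_of_mem _ ⟨(e, c, a), ⟨?_, ?_, ?_⟩, rfl⟩
      · show e.coeffSum ≤ n; omega
      · show c ≤ n.succPNat; rw [← PNat.coe_le_coe, Nat.succPNat_coe]; omega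
      · show a.coeffSum ≤ n; omega

end ONote

open ONote

theorem coeffSum_add_one_of_predO_eq_some :
    ∀ {α β : ONote}, predO α = some β → β.coeffSum + 1 = α.coeffSum
  | .zero, _, h => by simp [predO] at h
  | .oadd .zero n .zero, _, h => by
      simp only [predO, Option.some.injEq] at h
      subst h
      have := n.pos
      split <;> simp only [coeffSum, PNat.mk_coe] <;> omega
  | .oadd _ _ (.oadd _ _ _), _, h => by
      simp only [predO] at h
      obtain ⟨β', hβ', rfl⟩ := Option.map_eq_some_iff.1 h
      have := coeffSum_add_one_of_predO_eq_some hβ'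
      simp only [coeffSum] at this ⊢
      omega
  | .oadd (.oadd _ _ _) _ .zero, _, h => by simp [predO] at h

theorem fundSeq_ne_zero : ∀ {α : ONote} {x : ℕ}, predO α = none → α ≠ .zero → x ≠ 0 →
    fundSeq α x ≠ .zero
  | .zero, _, _, h, _ => absurd rfl h
  | .oadd .zero _ .zero, _, hp, _, _ => by simp [predO] at hp
  | .oadd _ _ (.oadd _ _ _), _, _, _, _ => by simp [fundSeq]
  | .oadd (.oadd f m b) n .zero, x, _, _, hx => by
      cases hp : predO (.oadd f m b) <;> simp only [fundSeq, hp, hx] <;> split <;> simp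

theorem coeffSum_le_coeffSum_fundSeq : ∀ {α : ONote} {x : ℕ}, predO α = none → α ≠ .zero →
    2 ≤ x → α.coeffSum ≤ (fundSeq α x).coeffSum
  | .zero, _, _, h, _ => absurd rfl h
  | .oadd .zero _ .zero, _, hp, _, _ => by simp [predO] at hp
  | .oadd _ _ (.oadd _ _ _), x, hp, _, hx => by
      simp only [predO, Option.map_eq_none_iff] at hp
      have := coeffSum_le_coeffSum_fundSeq hp (by simp) hx
      simp only [fundSeq, coeffSum] at this ⊢
      omega
  | .oadd (.oadd f m b) n .zero, x, _, _, hx => by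
      have := n.pos
      cases hp : predO (.oadd f m b) with
      | some e =>
          have := coeffSum_add_one_of_predO_eq_some hp
          simp only [fundSeq, hp, dif_neg (show x ≠ 0 by omega)]
          split <;> simp only [coeffSum, PNat.mk_coe] at * <;> omega
      | none =>
          have := coeffSum_le_coeffSum_fundSeq hp (by simp) hx
          simp only [fundSeq, hp]
          split <;> simp only [coeffSum, PNat.mk_coe, PNat.one_coe] at * <;> omega

section Growth
variable {k : ℕ}

mutual
theorem EA.coeffSum_add_lt (hk : 2 ≤ k) {α : ONote} {b v : ℕ} :
    EA k α b v → α.coeffSum + b < v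
  | .zero b => by simp [coeffSum]
  | .succZero hp hi => by
      have := coeffSum_add_one_of_predO_eq_some hp
      have := IterEA.coeffSum_add_le hk hi (by omega)
      omega
  | .succStep hp he hi => by
      have := coeffSum_add_one_of_predO_eq_some hp
      have := EA.coeffSum_add_lt hk he
      have := IterEA.coeffSum_add_le hk hi (by omega)
      omega
  | .limZero hne hp hl hi => by
      have := LamSeq.coeffSum_le hk hne hp hl hk
      have := IterEA.coeffSum_add_le hk hi (by omega)
      omega
  | .limStep hne hp he hl hi => by
      have := EA.coeffSum_add_lt hk he
      have := LamSeq.coeffSum_le hk hne hp hl hk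
      have := IterEA.coeffSum_add_le hk hi (by omega)
      omega

theorem IterEA.add_le (hk : 2 ≤ k) {α : ONote} {n b v : ℕ} : IterEA k α n b v → b + n ≤ v
  | .zero _ _ => le_rfl
  | .succ hi he => by
      have := IterEA.add_le hk hi
      have := EA.coeffSum_add_lt hk he
      omega

theorem IterEA.coeffSum_add_le (hk : 2 ≤ k) {α : ONote} {n b v : ℕ} :
    IterEA k α n b v → n ≠ 0 → α.coeffSum + b + n ≤ v
  | .zero _ _, hn => absurd rfl hn
  | .succ hi he, _ => by
      have := IterEA.add_le hk hi
      have := EA.coeffSum_add_lt hk he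
      omega

theorem LamSeq.ne_zero (hk : 2 ≤ k) {α μ : ONote} {b l : ℕ} (hne : α ≠ .zero)
    (hp : predO α = none) : LamSeq k α b l μ → l ≠ 0 → μ ≠ .zero
  | .zero _ _, hl => absurd rfl hl
  | .succ _ he, _ => fundSeq_ne_zero hp hne (by have := EA.coeffSum_add_lt hk he; omega)

theorem LamSeq.coeffSum_le (hk : 2 ≤ k) {α μ : ONote} {b l : ℕ} (hne : α ≠ .zero)
    (hp : predO α = none) : LamSeq k α b l μ → 2 ≤ l → α.coeffSum ≤ μ.coeffSum
  | .zero _ _, hl => absurd hl (by omega)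
  | .succ hl he, _ => by
      have := coeffSum_pos (LamSeq.ne_zero hk hne hp hl (by omega))
      have := EA.coeffSum_add_lt hk he
      exact coeffSum_le_coeffSum_fundSeq hp hne (by omega)
end

end Growth

section Determinism
variable {k : ℕ}

mutual
theorem EA.det {α : ONote} {b v v' : ℕ} : EA k α b v → EA k α b v' → v = v'
  | .zero _, .zero _ => rfl
  | .zero _, .succZero hp _ => by simp [predO] at hp
  | .zero _, .succStep hp _ _ => by simp [predO] at hp
  | .zero _, .limZero hne _ _ _ => absurd rfl hne
  | .zero _, .limStep hne _ _ _ _ => absurd rfl hne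
  | .succZero hp _, .zero _ => by simp [predO] at hp
  | .succZero hp hi, .succZero hp' hi' => by
      obtain rfl := Option.some_injective _ (hp.symm.trans hp')
      exact IterEA.det hi hi'
  | .succZero hp _, .limZero _ hp' _ _ => by simp [hp] at hp'
  | .succStep hp _ _, .zero _ => by simp [predO] at hp
  | .succStep hp he hi, .succStep hp' he' hi' => by
      obtain rfl := Option.some_injective _ (hp.symm.trans hp')
      obtain rfl := EA.det he he'
      exact IterEA.det hi hi'
  | .succStep hp _ _, .limStep _ hp' _ _ _ => by simp [hp] at hp'
  | .limZero hne _ _ _, .zero _ => absurd rfl hne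
  | .limZero _ hp _ _, .succZero hp' _ => by simp [hp] at hp'
  | .limZero _ _ hl hi, .limZero _ _ hl' hi' => by
      obtain rfl := LamSeq.det hl hl'
      exact IterEA.det hi hi'
  | .limStep hne _ _ _ _, .zero _ => absurd rfl hne
  | .limStep _ hp _ _ _, .succStep hp' _ _ => by simp [hp] at hp'
  | .limStep _ _ he hl hi, .limStep _ _ he' hl' hi' => by
      obtain rfl := EA.det he he'
      obtain rfl := LamSeq.det hl hl'
      exact IterEA.det hi hi'

theorem IterEA.det {α : ONote} {n b v v' : ℕ} : IterEA k α n b v → IterEA k α n b v' → v = v'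
  | .zero _ _, .zero _ _ => rfl
  | .succ hi he, .succ hi' he' => by
      obtain rfl := IterEA.det hi hi'
      exact EA.det he he'

theorem LamSeq.det {α μ μ' : ONote} {b l : ℕ} : LamSeq k α b l μ → LamSeq k α b l μ' → μ = μ'
  | .zero _ _, .zero _ _ => rfl
  | .succ hl he, .succ hl' he' => by
      obtain rfl := LamSeq.det hl hl'
      rw [EA.det he he']
end

end Determinism

section NormalForm
variable {k m : ℕ}

theorem EA.exists_greatest_index (hk : 2 ≤ k) (hm : 0 < m) :
    ∃ α : ONote, α.NF ∧ (∃ v, EA k α 0 v ∧ v ≤ m) ∧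
      ∀ (β : ONote) (w : ℕ), β.NF → EA k β 0 w → w ≤ m → β.repr ≤ α.repr := by
  set S := {β : ONote | β.NF ∧ ∃ w, EA k β 0 w ∧ w ≤ m}
  have hS : S.Finite := (finite_setOf_coeffSum_le m).subset fun β ⟨_, w, hw, hwm⟩ => by
    have := EA.coeffSum_add_lt hk hw
    show β.coeffSum ≤ m; omega
  obtain ⟨α, ⟨hα, hαm⟩, hmax⟩ :=
    Set.exists_max_image S ONote.repr hS ⟨ONote.zero, NF.zero, 1, .zero 0, hm⟩
  exact ⟨α, hα, hαm, fun β w hβ hw hwm => hmax β ⟨hβ, w, hw, hwm⟩⟩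

theorem EA.exists_greatest_arg (hk : 2 ≤ k) {α : ONote} {v₀ : ℕ} (h₀ : EA k α 0 v₀)
    (hv₀ : v₀ ≤ m) :
    ∃ b v, EA k α b v ∧ v ≤ m ∧ ∀ b' w : ℕ, EA k α b' w → w ≤ m → b' ≤ b := by
  set S := {b : ℕ | ∃ w, EA k α b w ∧ w ≤ m}
  have hS : S.Finite := (Set.finite_Iic m).subset fun b ⟨w, hw, hwm⟩ => by
    have := EA.coeffSum_add_lt hk hw
    show b ≤ m; omega
  obtain ⟨b, ⟨v, hv, hvm⟩, hmax⟩ := Set.exists_max_image S id hS ⟨0, v₀, h₀, hv₀⟩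
  exact ⟨b, v, hv, hvm, fun b' w hw hwm => hmax b' ⟨w, hw, hwm⟩⟩

end NormalForm

/-- Every `m > 0` has a unique normal form `m = A_α(k,b) + l` with `α < ε₀`
maximal such that `A_α(k,0) ≤ m` and `b` maximal such that `A_α(k,b) ≤ m`. -/
theorem ea_normal_form_exists_unique (k m : ℕ) (hk : 3 ≤ k) (hm : 0 < m) :
    ∃! t : ONote × ℕ × ℕ, t.1.NF ∧
      (∃ v, EA k t.1 t.2.1 v ∧ m = v + t.2.2) ∧
      (∃ v0, EA k t.1 0 v0 ∧ v0 ≤ m) ∧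
      (∀ (β : ONote) (w : ℕ), β.NF → EA k β 0 w → w ≤ m →
        β.repr ≤ t.1.repr) ∧
      (∀ b' w : ℕ, EA k t.1 b' w → w ≤ m → b' ≤ t.2.1) := by
  obtain ⟨α, hα, ⟨v₀, h₀, hv₀⟩, hαmax⟩ := EA.exists_greatest_index (k := k) (by omega) hm
  obtain ⟨b, v, hv, hvm, hbmax⟩ := EA.exists_greatest_arg (by omega) h₀ hv₀
  refine ⟨(α, b, m - v),
    ⟨hα, ⟨v, hv, show m = v + (m - v) by omega⟩, ⟨v₀, h₀, hv₀⟩, hαmax, hbmax⟩, ?_⟩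
  rintro ⟨α', b', l'⟩ ⟨hα', ⟨v', hv', hm' : m = v' + l'⟩, ⟨w₀, hw₀, hw₀m⟩, hαmax', hbmax'⟩
  obtain rfl : α' = α := (@repr_inj _ _ hα' hα).1 <|
    le_antisymm (hαmax α' w₀ hα' hw₀ hw₀m) (hαmax' α v₀ hα h₀ hv₀)
  obtain rfl : b' = b := le_antisymm (hbmax b' v' hv' (by omega)) (hbmax' b v hv hvm)
  obtain rfl := EA.det hv' hv
  simp only [Prod.mk.injEq, true_and]
  omega
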